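/- arXiv:1203.0632 — 2 statements merged into one kernel-verified Lean document; each statement's English description precedes it below -/
import Mathlib

section
/- Let V be a finite-dimensional real inner product space of dimension n and T : V → V a self-adjoint positive-definite linear operator with eigenvalues, listed with multiplicity, ordered 0 < λ₁ ≤ λ₂ ≤ ⋯ ≤ λₙ. Let m_b be an integer with 0 ≤ m_b < n. Let u, u₀ ∈ V and let (u_k) be a sequence in V having the conjugate-gradient optimality property for target u and initial guess u₀ with respect to T. Then for every integer k ≥ m_b, ‖u − u_k‖_T ≤ 2 ((√(λ_{n−m_b}/λ₁) − 1)/(√(λ_{n−m_b}/λ₁) + 1))^{k−m_b} ‖u − u₀‖_T. -/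
/-!
By optimality, `‖u - u_k‖_T ≤ ‖p(T)(u - u₀)‖_T` for any `p` of degree `≤ k` with `p(0) = 1`, and
in an orthonormal eigenbasis `‖p(T)v‖_T ≤ maxᵢ |p(λᵢ)| · ‖v‖_T`. Take `p = q · r`, where
`q = ∏_{j > n - m_b} (1 - x / λⱼ)` kills the `m_b` largest eigenvalues and takes values in `[0, 1]`
on `[0, λ_{n-m_b}]`, and `r` is the Chebyshev polynomial `T_{k-m_b}` transported to
`[λ₁, λ_{n-m_b}]` and normalised at `0`. With `κ = λ_{n-m_b}/λ₁` and `σ = (√κ - 1)/(√κ + 1)`,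
the point `0` is sent to `(κ + 1)/(κ - 1) = (σ + σ⁻¹)/2`, where `T_m` takes the value
`(σ^m + σ^(-m))/2 ≥ σ^(-m)/2`; hence `|r| ≤ 2σ^(k-m_b)` on that interval.
-/

open RealInnerProductSpace

/-- The energy norm `‖v‖_T = ⟨Tv, v⟩^{1/2}` associated with a (self-adjoint
positive-definite) linear operator `T` on a real inner product space. -/
noncomputable def energyNorm {V : Type*} [NormedAddCommGroup V] [InnerProductSpace ℝ V]
    (T : V →ₗ[ℝ] V) (v : V) : ℝ :=
  Real.sqrt ⟪T v, v⟫

/-- A sequence `(u_k)` has the conjugate-gradient optimality property for target `u`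
and initial guess `u₀` with respect to `T` if for every `k` and every real polynomial
`p` with `deg p ≤ k` and `p(0) = 1`, `‖u - u_k‖_T ≤ ‖p(T)(u - u₀)‖_T`. -/
def CGOptimal {V : Type*} [NormedAddCommGroup V] [InnerProductSpace ℝ V]
    (T : V →ₗ[ℝ] V) (u u₀ : V) (useq : ℕ → V) : Prop :=
  ∀ (k : ℕ) (p : Polynomial ℝ), p.natDegree ≤ k → p.eval 0 = 1 →
    energyNorm T (u - useq k) ≤
      energyNorm T ((Polynomial.aeval (T : Module.End ℝ V) p) (u - u₀))



open Polynomial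

theorem Polynomial.Chebyshev.eval_T_real_half_add_inv {x : ℝ} (hx : x ≠ 0) (m : ℕ) :
    (T ℝ m).eval ((x + x⁻¹) / 2) = (x ^ m + x⁻¹ ^ m) / 2 := by
  have h := congrArg (eval ((x + x⁻¹) / 2)) (C_comp_two_mul_X ℝ (m : ℤ))
  rw [eval_comp, ← dickson_one_one_eq_chebyshev_C, eval_mul, eval_ofNat, eval_X,
    mul_div_cancel₀ _ two_ne_zero, dickson_one_one_eval_add_inv _ _ (mul_inv_cancel₀ hx),
    eval_mul, eval_ofNat] at h
  linarith

noncomputable def cgRate (κ : ℝ) : ℝ := (√κ - 1) / (√κ + 1)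

theorem cgRate_nonneg {κ : ℝ} (hκ : 1 ≤ κ) : 0 ≤ cgRate κ := by
  have : 1 ≤ √κ := Real.one_le_sqrt.2 hκ
  unfold cgRate
  exact div_nonneg (by linarith) (by linarith)

theorem cgRate_pos {κ : ℝ} (hκ : 1 < κ) : 0 < cgRate κ := by
  have : 1 < √κ := by simpa using Real.sqrt_lt_sqrt zero_le_one hκ
  unfold cgRate
  exact div_pos (by linarith) (by linarith)

theorem cgRate_add_inv {κ : ℝ} (hκ : 1 < κ) :
    (cgRate κ + (cgRate κ)⁻¹) / 2 = (κ + 1) / (κ - 1) := by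
  have hs : 1 < √κ := by simpa using Real.sqrt_lt_sqrt zero_le_one hκ
  have hκs : κ = √κ ^ 2 := (Real.sq_sqrt (zero_le_one.trans hκ.le)).symm
  rw [cgRate, inv_div, hκs, Real.sqrt_sq (by positivity)]
  generalize √κ = s at hs ⊢
  have h1 : s - 1 ≠ 0 := by linarith
  have h2 : s ^ 2 - 1 ≠ 0 := by nlinarith
  field_simp
  ring

theorem inv_eval_T_le_two_mul_cgRate_pow {κ : ℝ} (hκ : 1 < κ) (m : ℕ) :
    ((Chebyshev.T ℝ m).eval ((κ + 1) / (κ - 1)))⁻¹ ≤ 2 * cgRate κ ^ m := by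
  have hσ := cgRate_pos hκ
  rw [← cgRate_add_inv hκ, Chebyshev.eval_T_real_half_add_inv hσ.ne']
  calc ((cgRate κ ^ m + (cgRate κ)⁻¹ ^ m) / 2)⁻¹ ≤ ((cgRate κ)⁻¹ ^ m / 2)⁻¹ := by
        gcongr
        linarith [pow_pos hσ m]
    _ = 2 * cgRate κ ^ m := by rw [inv_div, inv_pow, div_inv_eq_mul]

theorem exists_poly_abs_le_cgRate_of_lt {a b : ℝ} (ha : 0 < a) (hab : a < b) (m : ℕ) :
    ∃ r : ℝ[X], r.natDegree ≤ m ∧ r.eval 0 = 1 ∧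
      ∀ x ∈ Set.Icc a b, |r.eval x| ≤ 2 * cgRate (b / a) ^ m := by
  have hκ : 1 < b / a := (one_lt_div ha).2 hab
  have hba : 0 < b - a := sub_pos.2 hab
  -- the affine map sending `[a, b]` onto `[-1, 1]`, reversing orientation
  set L : ℝ[X] := C (b - a)⁻¹ * (C (b + a) - 2 * X)
  set c := (Chebyshev.T ℝ m).eval (L.eval 0) with hc_def
  have hL0 : L.eval 0 = (b / a + 1) / (b / a - 1) := by
    simp only [L, eval_mul, eval_C, eval_sub, eval_ofNat, eval_X, mul_zero, sub_zero]
    field_simp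
  have hc : 1 ≤ c :=
    Chebyshev.one_le_eval_T_real _ (by rw [hL0, le_div_iff₀ (by linarith)]; linarith)
  refine ⟨C c⁻¹ * (Chebyshev.T ℝ m).comp L, ?_, ?_, fun x hx => ?_⟩
  · refine natDegree_C_mul_le _ _ |>.trans <| natDegree_comp_le.trans ?_
    have hL : L.natDegree ≤ 1 := by simp only [L]; compute_degree
    rw [Chebyshev.natDegree_T]
    simpa using Nat.mul_le_mul_left m hL
  · simp only [eval_mul, eval_C, eval_comp]
    exact inv_mul_cancel₀ (by linarith)
  · have hLx : |L.eval x| ≤ 1 := by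
      simp only [L, eval_mul, eval_C, eval_sub, eval_ofNat, eval_X]
      rw [abs_mul, abs_inv, abs_of_pos hba, inv_mul_le_one₀ hba, abs_le]
      constructor <;> linarith [hx.1, hx.2]
    simp only [eval_mul, eval_C, eval_comp, abs_mul, abs_inv, abs_of_pos (by linarith : 0 < c)]
    calc c⁻¹ * |(Chebyshev.T ℝ m).eval (L.eval x)| ≤ c⁻¹ * 1 := by
          gcongr; exact Chebyshev.abs_eval_T_real_le_one _ hLx
      _ ≤ 2 * cgRate (b / a) ^ m := by
          rw [mul_one, hc_def, hL0]
          exact inv_eval_T_le_two_mul_cgRate_pow hκ m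

theorem exists_poly_abs_le_cgRate {a b : ℝ} (ha : 0 < a) (hab : a ≤ b) (m : ℕ) :
    ∃ r : ℝ[X], r.natDegree ≤ m ∧ r.eval 0 = 1 ∧
      ∀ x ∈ Set.Icc a b, |r.eval x| ≤ 2 * cgRate (b / a) ^ m := by
  obtain hab | rfl := hab.lt_or_eq
  · exact exists_poly_abs_le_cgRate_of_lt ha hab m
  -- for `a = b` the Chebyshev rescaling degenerates, but `(1 - x / a) ^ m` vanishes at `a`
  refine ⟨(1 - C a⁻¹ * X) ^ m, ?_, by simp, fun x hx => ?_⟩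
  · refine natDegree_pow_le.trans ?_
    have h1 : (1 - C a⁻¹ * X).natDegree ≤ 1 := by compute_degree
    simpa using Nat.mul_le_mul_left m h1
  · obtain rfl : x = a := le_antisymm hx.2 hx.1
    cases m with
    | zero => norm_num
    | succ m => simp [inv_mul_cancel₀ ha.ne', div_self ha.ne', cgRate]

noncomputable def deflationPoly {ι : Type*} (s : Finset ι) (μ : ι → ℝ) : ℝ[X] :=
  ∏ j ∈ s, (1 - C (μ j)⁻¹ * X)

section Deflation
variable {ι : Type*} (s : Finset ι) (μ : ι → ℝ)

theorem natDegree_deflationPoly_le : (deflationPoly s μ).natDegree ≤ s.card := by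
  refine natDegree_prod_le _ _ |>.trans ?_
  refine (Finset.sum_le_sum fun j (_ : j ∈ s) => ?_).trans_eq (Finset.card_eq_sum_ones s).symm
  compute_degree

theorem eval_zero_deflationPoly : (deflationPoly s μ).eval 0 = 1 := by
  simp [deflationPoly, eval_prod]

variable {s μ}

theorem eval_deflationPoly_eq_zero {j : ι} (hj : j ∈ s) (hμ : μ j ≠ 0) :
    (deflationPoly s μ).eval (μ j) = 0 := by
  rw [deflationPoly, eval_prod]
  exact Finset.prod_eq_zero hj (by simp [inv_mul_cancel₀ hμ])

theorem abs_eval_deflationPoly_le_one {x : ℝ} (hx : 0 ≤ x) (hμ : ∀ j ∈ s, x ≤ μ j) :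
    |(deflationPoly s μ).eval x| ≤ 1 := by
  have hmem : ∀ j ∈ s, 0 ≤ 1 - (μ j)⁻¹ * x ∧ 1 - (μ j)⁻¹ * x ≤ 1 := fun j hj => by
    have h1 : (μ j)⁻¹ * x ≤ 1 := by
      rw [← div_eq_inv_mul]; exact div_le_one_of_le₀ (hμ j hj) (hx.trans (hμ j hj))
    have h2 : 0 ≤ (μ j)⁻¹ * x := mul_nonneg (inv_nonneg.2 (hx.trans (hμ j hj))) hx
    constructor <;> linarith
  simp only [deflationPoly, eval_prod, eval_sub, eval_one, eval_mul, eval_C, eval_X]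
  rw [abs_of_nonneg (Finset.prod_nonneg fun j hj => (hmem j hj).1)]
  exact Finset.prod_le_one (fun j hj => (hmem j hj).1) (fun j hj => (hmem j hj).2)

end Deflation

theorem exists_poly_abs_eval_le_of_outliers {ι : Type*} (μ : ι → ℝ) (s : Finset ι) {a b : ℝ}
    (ha : 0 < a) (hab : a ≤ b) (hs : ∀ j ∈ s, b ≤ μ j) (hrest : ∀ i ∉ s, μ i ∈ Set.Icc a b)
    (m : ℕ) : ∃ p : ℝ[X], p.natDegree ≤ s.card + m ∧ p.eval 0 = 1 ∧
      ∀ i, |p.eval (μ i)| ≤ 2 * cgRate (b / a) ^ m := by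
  obtain ⟨r, hr_deg, hr_zero, hr_le⟩ := exists_poly_abs_le_cgRate ha hab m
  refine ⟨deflationPoly s μ * r,
    natDegree_mul_le.trans (add_le_add (natDegree_deflationPoly_le s μ) hr_deg),
    by rw [eval_mul, eval_zero_deflationPoly, hr_zero, one_mul], fun i => ?_⟩
  rw [eval_mul, abs_mul]
  by_cases hi : i ∈ s
  · rw [eval_deflationPoly_eq_zero hi (ha.trans_le (hab.trans (hs i hi))).ne', abs_zero, zero_mul]
    exact mul_nonneg zero_le_two (pow_nonneg (cgRate_nonneg ((one_le_div ha).2 hab)) _)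
  · have hq := abs_eval_deflationPoly_le_one (ha.le.trans (hrest i hi).1)
      fun j hj => (hrest i hi).2.trans (hs j hj)
    simpa using mul_le_mul hq (hr_le _ (hrest i hi)) (abs_nonneg _) zero_le_one

section Spectral
variable {ι V : Type*} [Fintype ι] [NormedAddCommGroup V] [InnerProductSpace ℝ V]
  (b : OrthonormalBasis ι ℝ V) {μ : ι → ℝ} {T : V →ₗ[ℝ] V}

theorem OrthonormalBasis.inner_apply_of_eigen (hT : ∀ i, T (b i) = μ i • b i) (w : V) (i : ι) :
    ⟪b i, T w⟫ = μ i * ⟪b i, w⟫ := by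
  classical
  conv_lhs => rw [← b.sum_repr' w]
  simp [hT, inner_sum, inner_smul_right, b.inner_eq_ite]
  ring

theorem OrthonormalBasis.inner_apply_self_of_eigen (hT : ∀ i, T (b i) = μ i • b i) (w : V) :
    ⟪T w, w⟫ = ∑ i, μ i * ⟪b i, w⟫ ^ 2 := by
  rw [← b.sum_inner_mul_inner]
  refine Finset.sum_congr rfl fun i _ => ?_
  rw [real_inner_comm, b.inner_apply_of_eigen hT]
  ring

theorem OrthonormalBasis.aeval_apply_of_eigen (hT : ∀ i, T (b i) = μ i • b i) (p : ℝ[X])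
    (i : ι) : aeval T p (b i) = p.eval (μ i) • b i :=
  Module.End.aeval_apply_of_hasEigenvector
    ⟨Module.End.mem_eigenspace_iff.2 (hT i), b.orthonormal.ne_zero i⟩

theorem energyNorm_aeval_le (hT : ∀ i, T (b i) = μ i • b i) (hμ : ∀ i, 0 ≤ μ i) (p : ℝ[X])
    {M : ℝ} (hM : 0 ≤ M) (hp : ∀ i, |p.eval (μ i)| ≤ M) (v : V) :
    energyNorm T (aeval T p v) ≤ M * energyNorm T v := by
  rw [energyNorm, energyNorm, b.inner_apply_self_of_eigen hT, b.inner_apply_self_of_eigen hT,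
    ← Real.sqrt_sq hM, ← Real.sqrt_mul (sq_nonneg M), Finset.mul_sum]
  refine Real.sqrt_le_sqrt (Finset.sum_le_sum fun i _ => ?_)
  rw [b.inner_apply_of_eigen (b.aeval_apply_of_eigen hT p)]
  have hp2 : p.eval (μ i) ^ 2 ≤ M ^ 2 := sq_le_sq' (abs_le.1 (hp i)).1 (abs_le.1 (hp i)).2
  calc μ i * (p.eval (μ i) * ⟪b i, v⟫) ^ 2 = p.eval (μ i) ^ 2 * (μ i * ⟪b i, v⟫ ^ 2) := by ring
    _ ≤ M ^ 2 * (μ i * ⟪b i, v⟫ ^ 2) := by gcongr; exact mul_nonneg (hμ i) (sq_nonneg _)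

end Spectral

/-- PCG convergence estimate in terms of the `m_b`-th effective condition number.
If the eigenvalues of the self-adjoint positive-definite operator `T` on an
`n`-dimensional space, listed with multiplicity (encoded by an orthonormal basis of
eigenvectors), are ordered `0 < λ₁ ≤ ⋯ ≤ λₙ`, and `0 ≤ m_b < n`, then any sequence
with the conjugate-gradient optimality property satisfies, for `k ≥ m_b`,
`‖u - u_k‖_T ≤ 2 ((√(λ_{n-m_b}/λ₁) - 1)/(√(λ_{n-m_b}/λ₁) + 1))^{k-m_b} ‖u - u₀‖_T`. -/
theorem pcg_convergence_effective_condition_number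
    {V : Type*} [NormedAddCommGroup V] [InnerProductSpace ℝ V]
    (n : ℕ) (T : V →ₗ[ℝ] V)
    (lam : Fin n → ℝ) (hmono : Monotone lam)
    (hpos : ∀ i, 0 < lam i)
    (bas : OrthonormalBasis (Fin n) ℝ V)
    (hb : ∀ i : Fin n, T (bas i) = lam i • bas i)
    (mb : ℕ) (hmb : mb < n)
    (u u₀ : V) (useq : ℕ → V) (hcg : CGOptimal T u u₀ useq) :
    ∀ k : ℕ, mb ≤ k →
      energyNorm T (u - useq k) ≤
        2 * ((Real.sqrt (lam ⟨n - mb - 1, by omega⟩ / lam ⟨0, by omega⟩) - 1) /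
              (Real.sqrt (lam ⟨n - mb - 1, by omega⟩ / lam ⟨0, by omega⟩) + 1)) ^ (k - mb) *
          energyNorm T (u - u₀) := by
  intro k hk
  set i₀ : Fin n := ⟨0, by omega⟩
  set i₁ : Fin n := ⟨n - mb - 1, by omega⟩
  have hlo : ∀ i, lam i₀ ≤ lam i := fun i => hmono (Fin.le_def.2 (Nat.zero_le _))
  have hcard : (Finset.Ioi i₁).card + (k - mb) = k := by simp [i₁]; omega
  obtain ⟨p, hp_deg, hp_zero, hp_le⟩ := exists_poly_abs_eval_le_of_outliers lam (Finset.Ioi i₁)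
    (hpos i₀) (hlo i₁) (fun j hj => hmono (Finset.mem_Ioi.1 hj).le)
    (fun i hi => ⟨hlo i, hmono (not_lt.1 (by simpa using hi))⟩) (k - mb)
  exact (hcg k p (hcard ▸ hp_deg) hp_zero).trans <|
    energyNorm_aeval_le bas hb (fun i => (hpos i).le) p (le_trans (abs_nonneg _) (hp_le i₀)) hp_le _
end

section
/- Let a, b be real numbers with 0 < a ≤ b, let σ₀ be a finite subset of (0, ∞) with m elements, and let k ≥ m be an integer. Then there exists a real polynomial p with deg p ≤ k and p(0) = 1 such that p(μ) = 0 for every μ ∈ σ₀, and |p(λ)| ≤ 2 (∏_{μ ∈ σ₀} |1 − λ/μ|) ((√(b/a) − 1)/(√(b/a) + 1))^{k−m} for every λ ∈ [a, b]. -/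
/-!
Take `p = q · r`, where `q = ∏_{μ ∈ σ₀} (1 - X/μ)` carries the prescribed roots and accounts for
the product factor, and `r` of degree `k - m` is the Chebyshev polynomial `T_{k-m}` moved from
`[-1, 1]` to `[a, b]` and normalized by `r(0) = 1`. On `[a, b]`, `|r| ≤ 1 / T_{k-m}(x₀)` with
`x₀ = (b + a)/(b - a)`. Writing `x₀ = cosh t = (ρ + ρ⁻¹)/2` with `ρ = (√(b/a) - 1)/(√(b/a) + 1)`
gives `T_{k-m}(x₀) = cosh((k - m) t) ≥ ρ^{-(k-m)}/2`.
-/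

open Polynomial Real

section VanishingPoly

variable {K : Type*} [Field K]

noncomputable def vanishingPoly (s : Finset K) : K[X] := ∏ μ ∈ s, (1 - C μ⁻¹ * X)

theorem natDegree_vanishingPoly_le (s : Finset K) : (vanishingPoly s).natDegree ≤ s.card := by
  refine (natDegree_prod_le _ _).trans ?_
  simpa using Finset.sum_le_sum fun μ (_ : μ ∈ s) ↦
    (by compute_degree : (1 - C μ⁻¹ * X : K[X]).natDegree ≤ 1)

theorem eval_vanishingPoly (s : Finset K) (x : K) :
    (vanishingPoly s).eval x = ∏ μ ∈ s, (1 - x / μ) := by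
  simp [vanishingPoly, eval_prod, div_eq_inv_mul]

theorem eval_vanishingPoly_of_mem {s : Finset K} {μ : K} (hμ : μ ∈ s) (hμ0 : μ ≠ 0) :
    (vanishingPoly s).eval μ = 0 := by
  rw [eval_vanishingPoly]
  exact Finset.prod_eq_zero hμ (by rw [div_self hμ0, sub_self])

end VanishingPoly

section Chebyshev

open Polynomial.Chebyshev

theorem inv_eval_T_add_inv_div_two_le {ρ : ℝ} (hρ : 0 < ρ) (n : ℕ) :
    ((T ℝ n).eval ((ρ + ρ⁻¹) / 2))⁻¹ ≤ 2 * ρ ^ n := by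
  have hT : (ρ ^ n)⁻¹ / 2 ≤ (T ℝ n).eval ((ρ + ρ⁻¹) / 2) := by
    have h_exp : exp (-(n * log ρ)) = (ρ ^ n)⁻¹ := by rw [exp_neg, exp_nat_mul, exp_log hρ]
    rw [← cosh_log hρ, T_real_cosh, cosh_eq, Int.cast_natCast, h_exp]
    gcongr
    exact le_add_of_nonneg_left (exp_pos _).le
  calc ((T ℝ n).eval ((ρ + ρ⁻¹) / 2))⁻¹ ≤ ((ρ ^ n)⁻¹ / 2)⁻¹ := inv_anti₀ (by positivity) hT
    _ = 2 * ρ ^ n := by rw [inv_div, div_inv_eq_mul]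


/-- The affine map `x ↦ (b + a - 2x)/(b - a)` sends `[a, b]` onto `[-1, 1]` and `0` to
`(b + a)/(b - a)`, where `T_n` is large. -/
noncomputable def shiftedChebyshev (a b : ℝ) (n : ℕ) : ℝ[X] :=
  C ((T ℝ n).eval ((b + a) / (b - a)))⁻¹ *
    (T ℝ n).comp (C ((b + a) / (b - a)) - C (2 / (b - a)) * X)

theorem natDegree_shiftedChebyshev_le (a b : ℝ) (n : ℕ) :
    (shiftedChebyshev a b n).natDegree ≤ n := by
  have h_affine : (C ((b + a) / (b - a)) - C (2 / (b - a)) * X : ℝ[X]).natDegree ≤ 1 := by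
    compute_degree
  refine (natDegree_C_mul_le _ _).trans (natDegree_comp_le.trans ?_)
  simpa [natDegree_T] using Nat.mul_le_mul_left n h_affine

variable {a b : ℝ}

theorem one_le_eval_T_add_div_sub (ha : 0 ≤ a) (hab : a < b) (n : ℕ) :
    1 ≤ (T ℝ n).eval ((b + a) / (b - a)) :=
  one_le_eval_T_real n <| (one_le_div (by linarith)).2 (by linarith)

theorem eval_zero_shiftedChebyshev (ha : 0 ≤ a) (hab : a < b) (n : ℕ) :
    (shiftedChebyshev a b n).eval 0 = 1 := by
  have hT := one_le_eval_T_add_div_sub ha hab n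
  simp [shiftedChebyshev, inv_mul_cancel₀ (by positivity : (T ℝ n).eval ((b + a) / (b - a)) ≠ 0)]

theorem abs_eval_shiftedChebyshev_le (ha : 0 ≤ a) (hab : a < b) (n : ℕ) {x : ℝ}
    (hx : x ∈ Set.Icc a b) :
    |(shiftedChebyshev a b n).eval x| ≤ ((T ℝ n).eval ((b + a) / (b - a)))⁻¹ := by
  have h_mem : |(b + a) / (b - a) - 2 / (b - a) * x| ≤ 1 := by
    rw [show (b + a) / (b - a) - 2 / (b - a) * x = (b + a - 2 * x) / (b - a) by ring, abs_div,
      abs_of_pos (sub_pos.2 hab), div_le_one (sub_pos.2 hab), abs_le]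
    constructor <;> linarith [hx.1, hx.2]
  simp only [shiftedChebyshev, eval_mul, eval_C, eval_comp, eval_sub, eval_X, abs_mul]
  have hT := one_le_eval_T_add_div_sub ha hab n
  rw [abs_of_pos (by positivity)]
  exact mul_le_of_le_one_right (by positivity) (abs_eval_T_real_le_one n h_mem)

end Chebyshev

section ChebyshevRate

noncomputable def chebyshevRate (a b : ℝ) : ℝ := (√(b / a) - 1) / (√(b / a) + 1)

theorem chebyshevRate_self (a : ℝ) (ha : a ≠ 0) : chebyshevRate a a = 0 := by
  simp [chebyshevRate, div_self ha]

variable {a b : ℝ}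

theorem one_lt_sqrt_div (ha : 0 < a) (hab : a < b) : 1 < √(b / a) := by
  rwa [lt_sqrt zero_le_one, one_pow, one_lt_div ha]

theorem chebyshevRate_pos (ha : 0 < a) (hab : a < b) : 0 < chebyshevRate a b := by
  have hs := one_lt_sqrt_div ha hab
  exact div_pos (by linarith) (by linarith)

theorem chebyshevRate_add_inv_div_two (ha : 0 < a) (hab : a < b) :
    (chebyshevRate a b + (chebyshevRate a b)⁻¹) / 2 = (b + a) / (b - a) := by
  have hs := one_lt_sqrt_div ha hab
  have hs2 : √(b / a) ^ 2 * a = b := by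
    rw [sq_sqrt (div_pos (ha.trans hab) ha).le, div_mul_cancel₀ b ha.ne']
  rw [chebyshevRate, inv_div]
  rw [div_add_div _ _ (by linarith) (by linarith), div_div,
    div_eq_div_iff (by nlinarith) (by linarith)]
  linear_combination (-4) * hs2

theorem exists_chebyshev_bound_on_Icc (ha : 0 < a) (hab : a ≤ b) (n : ℕ) :
    ∃ r : ℝ[X], r.natDegree ≤ n ∧ r.eval 0 = 1 ∧
      ∀ x ∈ Set.Icc a b, |r.eval x| ≤ 2 * chebyshevRate a b ^ n := by
  rcases hab.eq_or_lt with rfl | hab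
  · refine ⟨((1 : ℝ[X]) - C a⁻¹ * X) ^ n, ?_, by simp, fun x hx ↦ ?_⟩
    · exact (natDegree_pow_le_of_le n (by compute_degree)).trans (mul_one n).le
    · rw [le_antisymm hx.2 hx.1]
      simp only [eval_pow, eval_sub, eval_one, eval_mul, eval_C, eval_X, inv_mul_cancel₀ ha.ne',
        sub_self, abs_pow, abs_zero, chebyshevRate_self a ha.ne']
      exact le_mul_of_one_le_left (by positivity) one_le_two
  · refine ⟨shiftedChebyshev a b n, natDegree_shiftedChebyshev_le a b n,
      eval_zero_shiftedChebyshev ha.le hab n, fun x hx ↦ ?_⟩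
    calc |(shiftedChebyshev a b n).eval x|
        ≤ ((Chebyshev.T ℝ n).eval ((b + a) / (b - a)))⁻¹ :=
          abs_eval_shiftedChebyshev_le ha.le hab n hx
      _ ≤ 2 * chebyshevRate a b ^ n := by
        rw [← chebyshevRate_add_inv_div_two ha hab]
        exact inv_eval_T_add_inv_div_two_le (chebyshevRate_pos ha hab) n

end ChebyshevRate

/-- Chebyshev-polynomial bound with prescribed roots: for `0 < a ≤ b`, a finite set
`σ₀ ⊆ (0, ∞)` with `m` elements and an integer `k ≥ m`, there is a real polynomial
`p` with `deg p ≤ k`, `p(0) = 1` and `p(μ) = 0` for all `μ ∈ σ₀`, such that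
`|p(λ)| ≤ 2 (∏_{μ ∈ σ₀} |1 - λ/μ|) ((√(b/a) - 1)/(√(b/a) + 1))^{k-m}`
for every `λ ∈ [a, b]`. -/
theorem chebyshev_bound_with_roots (a b : ℝ) (ha : 0 < a) (hab : a ≤ b)
    (σ₀ : Finset ℝ) (hσ₀ : (σ₀ : Set ℝ) ⊆ Set.Ioi 0) (m : ℕ) (hm : σ₀.card = m)
    (k : ℕ) (hk : m ≤ k) :
    ∃ p : Polynomial ℝ, p.natDegree ≤ k ∧ p.eval 0 = 1 ∧
      (∀ μ ∈ σ₀, p.eval μ = 0) ∧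
      ∀ lam ∈ Set.Icc a b,
        |p.eval lam| ≤ 2 * (∏ μ ∈ σ₀, |1 - lam / μ|) *
          ((Real.sqrt (b / a) - 1) / (Real.sqrt (b / a) + 1)) ^ (k - m) := by
  obtain ⟨r, hr_deg, hr_zero, hr_bound⟩ := exists_chebyshev_bound_on_Icc ha hab (k - m)
  refine ⟨vanishingPoly σ₀ * r, ?_, ?_, fun μ hμ ↦ ?_, fun lam hlam ↦ ?_⟩
  · have := natDegree_vanishingPoly_le σ₀
    exact natDegree_mul_le.trans (by omega)
  · simp [eval_vanishingPoly, hr_zero]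
  · rw [eval_mul, eval_vanishingPoly_of_mem hμ (hσ₀ hμ).ne', zero_mul]
  · calc |(vanishingPoly σ₀ * r).eval lam|
        = (∏ μ ∈ σ₀, |1 - lam / μ|) * |r.eval lam| := by
          rw [eval_mul, abs_mul, eval_vanishingPoly, Finset.abs_prod]
      _ ≤ (∏ μ ∈ σ₀, |1 - lam / μ|) * (2 * chebyshevRate a b ^ (k - m)) := by
          gcongr
          exact hr_bound lam hlam
      _ = _ := by rw [chebyshevRate]; ring
end
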